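/- Let a > 0 and b > 0. The function f(x) = Γ(a, b·x^(1/a)) is (strictly) decreasing on [0, ∞), and for any natural numbers k ≥ 1 and M ≥ 1, any c > 0, and any nonnegative reals R_1, …, R_M, R with ∑_{p=1}^M R_p^k ≤ M·R^k, it follows that ∑_{p=1}^M (1 − Γ(k/2, c·R_p²)/Γ(k/2)) ≤ M·(1 − Γ(k/2, c·R²)/Γ(k/2)). -/

import Mathlib

/-!
For `y > 0` the derivative of `Γ(s, y)` is `-y^(s-1) e^(-y)`, so by the chain rule
`x ↦ Γ(s, b x^(1/s))` has derivative `-(b^s/s) e^(-b x^(1/s))` on `(0, ∞)`: the power of `x`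
cancels. This derivative is negative and strictly increasing, so the function is strictly
decreasing and strictly convex on `[0, ∞)`. For `s = k/2`, `b = c` its value at `x = R^k` is
`Γ(k/2, cR²)`; Jensen's inequality for the average of the `R_p^k`, followed by monotonicity
(the average is at most `R^k`), gives `∑_p Γ(k/2, cR_p²) ≥ M Γ(k/2, cR²)`.
-/

open Real Finset

/-- The upper incomplete gamma function `Γ(s, x) = ∫_x^∞ t^(s-1) e^(-t) dt`. -/
noncomputable def upperIncompleteGamma (s x : ℝ) : ℝ :=
  ∫ t in Set.Ioi x, t ^ (s - 1) * Real.exp (-t)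

open MeasureTheory Set Filter Topology

theorem card_mul_le_sum_of_convexOn_of_antitoneOn {ι : Type*} [Fintype ι] {D : Set ℝ}
    {f : ℝ → ℝ} (hf : ConvexOn ℝ D f) (hf_anti : AntitoneOn f D) {x : ι → ℝ} {x₀ : ℝ}
    (hx : ∀ i, x i ∈ D) (hx₀ : x₀ ∈ D) (hsum : ∑ i, x i ≤ Fintype.card ι * x₀) :
    Fintype.card ι * f x₀ ≤ ∑ i, f (x i) := by
  rcases isEmpty_or_nonempty ι with _ | _
  · simp
  have hcard : (0 : ℝ) < Fintype.card ι := by exact_mod_cast Fintype.card_pos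
  set w : ι → ℝ := fun _ => (Fintype.card ι : ℝ)⁻¹
  have hw_nonneg : ∀ i ∈ Finset.univ, 0 ≤ w i := fun _ _ => by positivity
  have hw : ∑ i, w i = 1 := by simp [w, hcard.ne']
  have hmean_mem : ∑ i, w i • x i ∈ D := hf.1.sum_mem hw_nonneg hw fun i _ => hx i
  have hmean_le : ∑ i, w i • x i ≤ x₀ := by
    rw [← smul_sum, smul_eq_mul, inv_mul_le_iff₀ hcard]
    exact hsum
  calc Fintype.card ι * f x₀ ≤ Fintype.card ι * f (∑ i, w i • x i) := by
        gcongr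
        exact hf_anti hmean_mem hx₀ hmean_le
    _ ≤ Fintype.card ι * ∑ i, w i • f (x i) := by
        gcongr
        exact hf.map_sum_le hw_nonneg hw fun i _ => hx i
    _ = ∑ i, f (x i) := by simp [w, mul_sum, hcard.ne']

theorem pow_rpow_two_div {r : ℝ} (hr : 0 ≤ r) {k : ℕ} (hk : k ≠ 0) :
    (r ^ k) ^ (2 / (k : ℝ)) = r ^ 2 := by
  rw [← rpow_natCast r k, ← rpow_mul hr, mul_div_cancel₀ _ (by exact_mod_cast hk)]
  exact_mod_cast rpow_natCast r 2

section UpperIncompleteGamma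

variable {s : ℝ}

theorem integrableOn_rpow_mul_exp_neg_Ioi (hs : 0 < s) :
    IntegrableOn (fun t : ℝ => t ^ (s - 1) * exp (-t)) (Ioi 0) :=
  (GammaIntegral_convergent hs).congr_fun (fun _ _ => mul_comm _ _) measurableSet_Ioi

theorem continuousOn_rpow_mul_exp_neg (s : ℝ) :
    ContinuousOn (fun t : ℝ => t ^ (s - 1) * exp (-t)) (Ioi 0) :=
  (continuousOn_id.rpow_const fun _ ht => Or.inl (ne_of_gt ht)).mul
    (continuous_exp.comp continuous_neg).continuousOn

theorem upperIncompleteGamma_eq_sub_intervalIntegral (hs : 0 < s) {y : ℝ} (hy : 0 ≤ y) :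
    upperIncompleteGamma s y =
      upperIncompleteGamma s 0 - ∫ t in (0)..y, t ^ (s - 1) * exp (-t) := by
  have hint := integrableOn_rpow_mul_exp_neg_Ioi hs
  rw [intervalIntegral.integral_of_le hy, upperIncompleteGamma, upperIncompleteGamma,
    ← Ioc_union_Ioi_eq_Ioi hy, setIntegral_union (Ioc_disjoint_Ioi le_rfl) measurableSet_Ioi
      (hint.mono_set Ioc_subset_Ioi_self) (hint.mono_set (Ioi_subset_Ioi hy))]
  ring

theorem hasDerivAt_upperIncompleteGamma (hs : 0 < s) {y : ℝ} (hy : 0 < y) :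
    HasDerivAt (upperIncompleteGamma s) (-(y ^ (s - 1) * exp (-y))) y := by
  have hint : IntervalIntegrable (fun t : ℝ => t ^ (s - 1) * exp (-t)) volume 0 y :=
    (intervalIntegrable_iff_integrableOn_Ioc_of_le hy.le).mpr
      ((integrableOn_rpow_mul_exp_neg_Ioi hs).mono_set Ioc_subset_Ioi_self)
  have hFTC := intervalIntegral.integral_hasDerivAt_right hint
    ((continuousOn_rpow_mul_exp_neg s).stronglyMeasurableAtFilter isOpen_Ioi y hy)
    ((continuousOn_rpow_mul_exp_neg s).continuousAt (Ioi_mem_nhds hy))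
  refine (hFTC.const_sub (upperIncompleteGamma s 0)).congr_of_eventuallyEq ?_
  filter_upwards [Ioi_mem_nhds hy] with z hz
  exact upperIncompleteGamma_eq_sub_intervalIntegral hs (le_of_lt hz)

theorem continuousOn_upperIncompleteGamma (hs : 0 < s) :
    ContinuousOn (upperIncompleteGamma s) (Ici 0) := by
  intro y hy
  have hIcc : uIcc 0 (y + 1) = Icc 0 (y + 1) := uIcc_of_le (by linarith [mem_Ici.mp hy])
  have hprim := intervalIntegral.continuousOn_primitive_interval (a := 0) (b := y + 1)
    (f := fun t : ℝ => t ^ (s - 1) * exp (-t)) (μ := volume) <| by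
      rw [hIcc, integrableOn_Icc_iff_integrableOn_Ioc]
      exact (integrableOn_rpow_mul_exp_neg_Ioi hs).mono_set Ioc_subset_Ioi_self
  rw [hIcc] at hprim
  have hnhds : Icc 0 (y + 1) ∈ 𝓝[Ici 0] y := by
    rw [← Ici_inter_Iic]
    exact inter_mem_nhdsWithin _ (Iic_mem_nhds (lt_add_one y))
  exact (((continuousOn_const.sub hprim) y ⟨hy, by linarith⟩).mono_of_mem_nhdsWithin
    hnhds).congr (fun z hz => upperIncompleteGamma_eq_sub_intervalIntegral hs hz)
    (upperIncompleteGamma_eq_sub_intervalIntegral hs hy)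

end UpperIncompleteGamma

section Composition

variable {s b : ℝ}

theorem hasDerivAt_upperIncompleteGamma_mul_rpow (hs : 0 < s) (hb : 0 < b) {x : ℝ}
    (hx : 0 < x) :
    HasDerivAt (fun x : ℝ => upperIncompleteGamma s (b * x ^ (1 / s)))
      (-(b ^ s / s * exp (-(b * x ^ (1 / s))))) x := by
  refine ((hasDerivAt_upperIncompleteGamma hs (by positivity)).comp x
    ((hasDerivAt_rpow_const (p := 1 / s) (Or.inl hx.ne')).const_mul b)).congr_deriv ?_
  have hx_pow : x ^ (1 / s * (s - 1)) * x ^ (1 / s - 1) = 1 := by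
    rw [← rpow_add hx, show 1 / s * (s - 1) + (1 / s - 1) = 0 by field_simp; ring, rpow_zero]
  have hb_pow : b ^ (s - 1) * b = b ^ s := by rw [← rpow_add_one hb.ne', sub_add_cancel]
  rw [mul_rpow hb.le (by positivity), ← rpow_mul hx.le]
  calc _ = -(b ^ (s - 1) * b / s * exp (-(b * x ^ (1 / s)))
          * (x ^ (1 / s * (s - 1)) * x ^ (1 / s - 1))) := by ring
    _ = _ := by rw [hb_pow, hx_pow, mul_one]

theorem continuousOn_upperIncompleteGamma_mul_rpow (hs : 0 < s) (hb : 0 ≤ b) :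
    ContinuousOn (fun x : ℝ => upperIncompleteGamma s (b * x ^ (1 / s))) (Ici 0) :=
  (continuousOn_upperIncompleteGamma hs).comp
    (continuousOn_const.mul (continuousOn_id.rpow_const fun _ _ => Or.inr (by positivity)))
    fun _ hx => mul_nonneg hb (rpow_nonneg hx _)

theorem strictAntiOn_upperIncompleteGamma_mul_rpow (hs : 0 < s) (hb : 0 < b) :
    StrictAntiOn (fun x : ℝ => upperIncompleteGamma s (b * x ^ (1 / s))) (Ici 0) := by
  refine strictAntiOn_of_deriv_neg (convex_Ici 0)
    (continuousOn_upperIncompleteGamma_mul_rpow hs hb.le) fun x hx => ?_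
  rw [interior_Ici] at hx
  rw [(hasDerivAt_upperIncompleteGamma_mul_rpow hs hb hx).deriv, neg_lt_zero]
  positivity

theorem strictConvexOn_upperIncompleteGamma_mul_rpow (hs : 0 < s) (hb : 0 < b) :
    StrictConvexOn ℝ (Ici 0) (fun x : ℝ => upperIncompleteGamma s (b * x ^ (1 / s))) := by
  refine StrictMonoOn.strictConvexOn_of_deriv (convex_Ici 0)
    (continuousOn_upperIncompleteGamma_mul_rpow hs hb.le) ?_
  rw [interior_Ici]
  intro x hx y hy hxy
  rw [(hasDerivAt_upperIncompleteGamma_mul_rpow hs hb hx).deriv,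
    (hasDerivAt_upperIncompleteGamma_mul_rpow hs hb hy).deriv]
  have : 0 < 1 / s := by positivity
  gcongr
  exact le_of_lt hx

end Composition

/-- For `a, b > 0` the function `x ↦ Γ(a, b·x^(1/a))` is strictly decreasing on `[0, ∞)`;
moreover, for radii with `∑ R_p^k ≤ M·R^k` one has
`∑_p (1 − Γ(k/2, c·R_p²)/Γ(k/2)) ≤ M·(1 − Γ(k/2, c·R²)/Γ(k/2))`. -/
theorem strictAnti_and_sum_prob_le (a b : ℝ) (ha : 0 < a) (hb : 0 < b) :
    StrictAntiOn (fun x : ℝ => upperIncompleteGamma a (b * x ^ (1 / a))) (Set.Ici 0) ∧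
      ∀ (k M : ℕ), 1 ≤ k → 1 ≤ M → ∀ c : ℝ, 0 < c →
        ∀ (R : Fin M → ℝ) (R₀ : ℝ), (∀ p, 0 ≤ R p) → 0 ≤ R₀ →
          (∑ p, R p ^ k) ≤ (M : ℝ) * R₀ ^ k →
          ∑ p, (1 - upperIncompleteGamma ((k : ℝ) / 2) (c * R p ^ 2) /
                Real.Gamma ((k : ℝ) / 2)) ≤
            (M : ℝ) * (1 - upperIncompleteGamma ((k : ℝ) / 2) (c * R₀ ^ 2) /
                Real.Gamma ((k : ℝ) / 2)) := by
  refine ⟨strictAntiOn_upperIncompleteGamma_mul_rpow ha hb, ?_⟩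
  intro k M hk _ c hc R R₀ hR hR₀ hsum
  have hs : 0 < (k : ℝ) / 2 := by positivity
  have hradius : ∀ r : ℝ, 0 ≤ r → c * (r ^ k) ^ (1 / ((k : ℝ) / 2)) = c * r ^ 2 :=
    fun r hr => by rw [one_div_div, pow_rpow_two_div hr (by omega)]
  have hJensen : (M : ℝ) * upperIncompleteGamma (k / 2) (c * R₀ ^ 2) ≤
      ∑ p, upperIncompleteGamma (k / 2) (c * R p ^ 2) := by
    have := card_mul_le_sum_of_convexOn_of_antitoneOn
      (strictConvexOn_upperIncompleteGamma_mul_rpow hs hc).convexOn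
      (strictAntiOn_upperIncompleteGamma_mul_rpow hs hc).antitoneOn
      (x := fun p => R p ^ k) (fun p => pow_nonneg (hR p) k) (pow_nonneg hR₀ k)
      (by simpa using hsum)
    simpa only [Fintype.card_fin, hradius _ hR₀, hradius _ (hR _)] using this
  have hΓ := Gamma_pos_of_pos hs
  rw [sum_sub_distrib, ← sum_div, mul_sub, mul_one, ← mul_div_assoc]
  simp only [sum_const, card_univ, Fintype.card_fin, nsmul_eq_mul, mul_one]
  linarith [div_le_div_of_nonneg_right hJensen hΓ.le]
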